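/- Let (𝒜, ℱ) be a subshift of finite type on ℤ^d. Player B has a winning strategy in the Domino game Γ(𝒜, ℱ, ℤ^d) if and only if, for every n ∈ ℕ with n ≥ 1, player B has a winning strategy in the Domino game Γ(𝒜, ℱ, ⟦−n, n⟧^d) played on the finite box ⟦−n, n⟧^d. -/

import Mathlib

open Filter Topology

attribute [local instance] Classical.propDecidable

/-- The two players. -/
inductive Player | A | B
deriving DecidableEq

/-- A cell of the grid `ℤ^d`. -/
abbrev Cell (d : ℕ) := Fin d → ℤ

/-- A (possibly partial) colouring of the grid: `none` means uncoloured.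
Colours are natural numbers; the alphabet of size `m` is `{0, …, m-1}`. -/
abbrev Board (d : ℕ) := Cell d → Option ℕ

/-- A finite pattern, encoded as a list of tiles (cell, colour). -/
abbrev PatternCode (d : ℕ) := List (Cell d × ℕ)

/-- A move: `none` is a pass, `some (i, a)` colours cell `i` with colour `a`. -/
abbrev MoveD (d : ℕ) := Option (Cell d × ℕ)

/-- Code for an SFT: alphabet size together with the list of forbidden patterns. -/
abbrev SFTCode (d : ℕ) := ℕ × List (PatternCode d)

/-- A (positional) strategy: a move for every position. -/
abbrev Strategy (d : ℕ) := Board d → MoveD d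

def emptyBoard (d : ℕ) : Board d := fun _ => none

/-- The pattern `p` occurs in the board `x` translated by `t`. -/
def occursAt {d : ℕ} (p : PatternCode d) (x : Board d) (t : Cell d) : Prop :=
  ∀ q ∈ p, x (t + q.1) = some q.2

/-- A position is final when a translate of some forbidden pattern occurs. -/
def isFinal {d : ℕ} (F : List (PatternCode d)) (x : Board d) : Prop :=
  ∃ p ∈ F, ∃ t : Cell d, occursAt p x t

/-- Legality of a move in the game with alphabet `{0,…,m-1}` played on `E`:
a pass is always legal, and a colouring move must pick an uncoloured cell of `E`
and a colour of the alphabet. -/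
def legalMove {d : ℕ} (m : ℕ) (E : Set (Cell d)) (x : Board d) : MoveD d → Prop
  | none => True
  | some (i, a) => i ∈ E ∧ x i = none ∧ a < m

def applyMove {d : ℕ} (x : Board d) : MoveD d → Board d
  | none => x
  | some (i, a) => Function.update x i (some a)

/-- One step of the game: the move proposed by the strategy is played if legal
(an illegal move is treated as a pass). -/
noncomputable def step {d : ℕ} (m : ℕ) (E : Set (Cell d)) (st : Strategy d)
    (x : Board d) : Board d :=
  if legalMove m E x (st x) then applyMove x (st x) else x

/-- The play generated by strategies `stA`, `stB` with turn order `s`,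
starting from the empty board. -/
noncomputable def play {d : ℕ} (m : ℕ) (E : Set (Cell d)) (s : ℕ → Player)
    (stA stB : Strategy d) : ℕ → Board d
  | 0 => emptyBoard d
  | t + 1 => step m E (match s t with | .A => stA | .B => stB) (play m E s stA stB t)

/-- The alternating turn order: `A` plays first. -/
def alt : ℕ → Player := fun t => if t % 2 = 0 then .A else .B

/-- Player `A` has a winning strategy in the Domino game with turn order `s`:
a final position is eventually reached whatever `B` plays. -/
def AWins {d : ℕ} (m : ℕ) (F : List (PatternCode d)) (E : Set (Cell d))
    (s : ℕ → Player) : Prop :=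
  ∃ stA : Strategy d, ∀ stB : Strategy d, ∃ t : ℕ, isFinal F (play m E s stA stB t)

/-- Player `B` has a winning strategy in the Domino game with turn order `s`:
a final position is never reached whatever `A` plays. -/
def BWins {d : ℕ} (m : ℕ) (F : List (PatternCode d)) (E : Set (Cell d))
    (s : ℕ → Player) : Prop :=
  ∃ stB : Strategy d, ∀ stA : Strategy d, ∀ t : ℕ, ¬ isFinal F (play m E s stA stB t)

/-- The Domino game problem on `ℤ^d` (alternating turn order, `A` first). -/
def DGame (d : ℕ) : SFTCode d → Prop :=
  fun c => AWins c.1 c.2 Set.univ alt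

/-- The finite box `⟦-n, n⟧^d` of cells of `ℤ^d`. -/
def box (d n : ℕ) : Set (Cell d) := {i | ∀ k, |i k| ≤ (n : ℤ)}


/-!
Call a set `W` of positions (with `A` to move) safe for `B` if no position of `W` is final and,
whatever legal move `A` makes, the result is not final and `B` has a legal reply leading back
into `W`. `B` wins iff the empty board lies in a safe set: one direction plays a reply into the
set, the other takes the positions reachable against a fixed winning strategy of `B`.

Restricting boards to a subarena maps safe sets to safe sets, which gives the forward direction.
Conversely, the finitely supported boards that are safe in all large enough boxes form a safe
set for `ℤ^d`: after a move of `A`, either one colouring move of `B` is a safe reply in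
infinitely many boxes, or, in each box `⟦-K, K⟧^d`, the safe replies in large boxes eventually
colour no cell of that box, so restricting them to it shows that passing is safe there.
-/

open Set

variable {d m : ℕ} {F : List (PatternCode d)} {E E' : Set (Cell d)}

section Moves

lemma exists_legalMove_step (st : Strategy d) (x : Board d) :
    ∃ a, legalMove m E x a ∧ step m E st x = applyMove x a := by
  by_cases h : legalMove m E x (st x)
  · exact ⟨st x, h, if_pos h⟩
  · exact ⟨none, trivial, if_neg h⟩

lemma step_of_legalMove {st : Strategy d} {x : Board d} (h : legalMove m E x (st x)) :
    step m E st x = applyMove x (st x) :=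
  if_pos h

lemma step_update_of_ne {st : Strategy d} {x y : Board d} (a : MoveD d) (h : y ≠ x) :
    step m E (Function.update st x a) y = step m E st y := by
  simp only [step, Function.update_of_ne h]

lemma play_two_mul_add_one (stA stB : Strategy d) (j : ℕ) :
    play m E alt stA stB (2 * j + 1) = step m E stA (play m E alt stA stB (2 * j)) := by
  simp [play, alt]

lemma play_two_mul_add_two (stA stB : Strategy d) (j : ℕ) :
    play m E alt stA stB (2 * j + 2) = step m E stB (play m E alt stA stB (2 * j + 1)) := by
  have h : (2 * j + 1) % 2 = 1 := by omega
  simp [play, alt, h]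

end Moves

section SafeSets

def IsSafeSet (m : ℕ) (F : List (PatternCode d)) (E : Set (Cell d)) (W : Set (Board d)) :
    Prop :=
  ∀ x ∈ W, ¬ isFinal F x ∧ ∀ a, legalMove m E x a → ¬ isFinal F (applyMove x a) ∧
    ∃ b, legalMove m E (applyMove x a) b ∧ applyMove (applyMove x a) b ∈ W

def safeRegion (m : ℕ) (F : List (PatternCode d)) (E : Set (Cell d)) : Set (Board d) :=
  ⋃₀ {W | IsSafeSet m F E W}

lemma IsSafeSet.subset_safeRegion {W : Set (Board d)} (hW : IsSafeSet m F E W) :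
    W ⊆ safeRegion m F E :=
  subset_sUnion_of_mem hW

lemma isSafeSet_safeRegion : IsSafeSet m F E (safeRegion m F E) := by
  rintro x ⟨W, hW, hx⟩
  obtain ⟨hfinal, hmoves⟩ := hW x hx
  refine ⟨hfinal, fun a ha => ?_⟩
  obtain ⟨hfinal', b, hb, hmem⟩ := hmoves a ha
  exact ⟨hfinal', b, hb, IsSafeSet.subset_safeRegion hW hmem⟩

noncomputable def safeStrategy (m : ℕ) (F : List (PatternCode d)) (E : Set (Cell d)) :
    Strategy d := fun z =>
  if h : ∃ b, legalMove m E z b ∧ applyMove z b ∈ safeRegion m F E then h.choose else none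

lemma step_safeStrategy_mem {z : Board d}
    (h : ∃ b, legalMove m E z b ∧ applyMove z b ∈ safeRegion m F E) :
    step m E (safeStrategy m F E) z ∈ safeRegion m F E := by
  have hspec : safeStrategy m F E z = h.choose := dif_pos h
  rw [step_of_legalMove (hspec ▸ h.choose_spec.1), hspec]
  exact h.choose_spec.2

lemma bWins_of_emptyBoard_mem_safeRegion (h : emptyBoard d ∈ safeRegion m F E) :
    BWins m F E alt := by
  refine ⟨safeStrategy m F E, fun stA => ?_⟩
  set p := play m E alt stA (safeStrategy m F E)
  have hround : ∀ j, p (2 * j) ∈ safeRegion m F E →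
      ¬ isFinal F (p (2 * j + 1)) ∧ p (2 * j + 2) ∈ safeRegion m F E := by
    intro j hj
    obtain ⟨a, ha, hstep⟩ := exists_legalMove_step stA (p (2 * j))
    obtain ⟨hfinal, hreply⟩ := (isSafeSet_safeRegion _ hj).2 a ha
    have hmoveA : p (2 * j + 1) = applyMove (p (2 * j)) a :=
      (play_two_mul_add_one _ _ j).trans hstep
    have hmoveB : p (2 * j + 2) = step m E (safeStrategy m F E) (p (2 * j + 1)) :=
      play_two_mul_add_two _ _ j
    rw [hmoveB, hmoveA]
    exact ⟨hfinal, step_safeStrategy_mem hreply⟩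
  have heven : ∀ j, p (2 * j) ∈ safeRegion m F E := by
    intro j
    induction j with
    | zero => exact h
    | succ j ih => exact (hround j ih).2
  intro t
  obtain ⟨j, rfl | rfl⟩ := Nat.even_or_odd' t
  · exact (isSafeSet_safeRegion _ (heven j)).1
  · exact (hround j (heven j)).1

/-- Strategies are positional, so redirecting `A` at `x` changes nothing before the first
time `x` is reached. -/
lemma play_update_eq {stA stB : Strategy d} {x : Board d} {j : ℕ}
    (hx : ∀ i < j, play m E alt stA stB (2 * i) ≠ x) (a : MoveD d) :
    ∀ i ≤ j,
      play m E alt (Function.update stA x a) stB (2 * i) = play m E alt stA stB (2 * i) := by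
  intro i hi
  induction i with
  | zero => rfl
  | succ i ih =>
    rw [show 2 * (i + 1) = 2 * i + 2 by ring, play_two_mul_add_two, play_two_mul_add_one,
      play_two_mul_add_two, play_two_mul_add_one, ih (by omega),
      step_update_of_ne a (hx i (by omega))]

lemma isSafeSet_reachable {stB : Strategy d}
    (hB : ∀ stA t, ¬ isFinal F (play m E alt stA stB t)) :
    IsSafeSet m F E {x | ∃ stA j, play m E alt stA stB (2 * j) = x} := by
  rintro x ⟨stA, hreach⟩
  have hx : play m E alt stA stB (2 * Nat.find hreach) = x := Nat.find_spec hreach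
  refine ⟨hx ▸ hB stA _, fun a ha => ?_⟩
  set stA' := Function.update stA x a
  have hx' : play m E alt stA' stB (2 * Nat.find hreach) = x :=
    (play_update_eq (fun i hi => Nat.find_min hreach hi) a _ le_rfl).trans hx
  have hA : play m E alt stA' stB (2 * Nat.find hreach + 1) = applyMove x a := by
    have hmove : stA' x = a := Function.update_self x a stA
    rw [play_two_mul_add_one, hx', step_of_legalMove (hmove ▸ ha), hmove]
  obtain ⟨b, hb, hstep⟩ := exists_legalMove_step stB (applyMove x a)
  refine ⟨hA ▸ hB stA' _, b, hb, stA', Nat.find hreach + 1, ?_⟩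
  rw [show 2 * (Nat.find hreach + 1) = 2 * Nat.find hreach + 2 by ring, play_two_mul_add_two, hA,
    hstep]

lemma bWins_iff_emptyBoard_mem_safeRegion :
    BWins m F E alt ↔ emptyBoard d ∈ safeRegion m F E := by
  refine ⟨fun ⟨_, hB⟩ => ?_, bWins_of_emptyBoard_mem_safeRegion⟩
  exact IsSafeSet.subset_safeRegion (isSafeSet_reachable hB) ⟨fun _ => none, 0, rfl⟩

end SafeSets

section Restriction

noncomputable def restrictBoard (E : Set (Cell d)) (x : Board d) : Board d :=
  fun i => if i ∈ E then x i else none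

lemma restrictBoard_emptyBoard : restrictBoard E (emptyBoard d) = emptyBoard d := by
  funext i
  simp [restrictBoard, emptyBoard]

lemma isFinal_of_isFinal_restrictBoard {x : Board d} (h : isFinal F (restrictBoard E x)) :
    isFinal F x := by
  obtain ⟨p, hp, t, hocc⟩ := h
  refine ⟨p, hp, t, fun q hq => ?_⟩
  have := hocc q hq
  simp only [restrictBoard] at this
  split_ifs at this
  exact this

lemma restrictBoard_applyMove_of_mem {x : Board d} {i : Cell d} (c : ℕ) (hi : i ∈ E) :
    restrictBoard E (applyMove x (some (i, c))) = applyMove (restrictBoard E x) (some (i, c)) := by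
  funext j
  by_cases hj : j = i
  · subst hj
    simp [restrictBoard, applyMove, hi]
  · simp [restrictBoard, applyMove, Function.update_of_ne hj]

lemma restrictBoard_applyMove_of_notMem {x : Board d} {i : Cell d} (c : ℕ) (hi : i ∉ E) :
    restrictBoard E (applyMove x (some (i, c))) = restrictBoard E x := by
  funext j
  by_cases hj : j = i
  · subst hj
    simp [restrictBoard, hi]
  · simp [restrictBoard, applyMove, Function.update_of_ne hj]

lemma legalMove_of_legalMove_restrictBoard (hE : E ⊆ E') {x : Board d} {a : MoveD d}
    (h : legalMove m E (restrictBoard E x) a) :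
    legalMove m E' x a ∧ restrictBoard E (applyMove x a) = applyMove (restrictBoard E x) a := by
  rcases a with _ | ⟨i, c⟩
  · exact ⟨trivial, rfl⟩
  · obtain ⟨hi, hfree, hc⟩ := h
    have hfree' : x i = none := by simpa [restrictBoard, hi] using hfree
    exact ⟨⟨hE hi, hfree', hc⟩, restrictBoard_applyMove_of_mem c hi⟩

lemma exists_legalMove_restrictBoard {x : Board d} {b : MoveD d} (h : legalMove m E' x b) :
    ∃ b', legalMove m E (restrictBoard E x) b' ∧
      restrictBoard E (applyMove x b) = applyMove (restrictBoard E x) b' := by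
  rcases b with _ | ⟨i, c⟩
  · exact ⟨none, trivial, rfl⟩
  · by_cases hi : i ∈ E
    · refine ⟨some (i, c), ⟨hi, ?_, h.2.2⟩, restrictBoard_applyMove_of_mem c hi⟩
      simp [restrictBoard, hi, h.2.1]
    · exact ⟨none, trivial, restrictBoard_applyMove_of_notMem c hi⟩

lemma IsSafeSet.image_restrictBoard (hE : E ⊆ E') {W : Set (Board d)}
    (hW : IsSafeSet m F E' W) : IsSafeSet m F E (restrictBoard E '' W) := by
  rintro _ ⟨x, hx, rfl⟩
  obtain ⟨hfinal, hmoves⟩ := hW x hx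
  refine ⟨fun h => hfinal (isFinal_of_isFinal_restrictBoard h), fun a ha => ?_⟩
  obtain ⟨ha', hrestrict⟩ := legalMove_of_legalMove_restrictBoard hE ha
  obtain ⟨hfinal', b, hb, hmem⟩ := hmoves a ha'
  obtain ⟨b', hb', hrestrict'⟩ := exists_legalMove_restrictBoard (E := E) hb
  rw [← hrestrict]
  exact ⟨fun h => hfinal' (isFinal_of_isFinal_restrictBoard h), b', hb', _, hmem, hrestrict'⟩

lemma restrictBoard_mem_safeRegion (hE : E ⊆ E') {x : Board d}
    (hx : x ∈ safeRegion m F E') : restrictBoard E x ∈ safeRegion m F E :=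
  IsSafeSet.subset_safeRegion (isSafeSet_safeRegion.image_restrictBoard hE) ⟨x, hx, rfl⟩

end Restriction

section Boxes

def SupportedIn (k : ℕ) (x : Board d) : Prop :=
  ∀ i, x i ≠ none → i ∈ box d k

lemma box_mono {k n : ℕ} (h : k ≤ n) : box d k ⊆ box d n :=
  fun _ hi l => (hi l).trans (by exact_mod_cast h)

lemma finite_box (n : ℕ) : (box d n).Finite := by
  have : box d n = univ.pi fun _ => Icc (-(n : ℤ)) n := by
    ext i
    simp only [box, mem_ofPred_eq, mem_univ_pi, mem_Icc, abs_le]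
  rw [this]
  exact Finite.pi fun _ => finite_Icc _ _

lemma exists_mem_box (i : Cell d) : ∃ n, i ∈ box d n :=
  ⟨Finset.univ.sup fun l => (i l).natAbs, fun l => by
    rw [Int.abs_eq_natAbs]
    exact_mod_cast Finset.le_sup (f := fun l => (i l).natAbs) (Finset.mem_univ l)⟩

lemma supportedIn_emptyBoard (k : ℕ) : SupportedIn k (emptyBoard d) :=
  fun _ h => absurd rfl h

lemma SupportedIn.mono {k n : ℕ} {x : Board d} (hx : SupportedIn k x) (h : k ≤ n) :
    SupportedIn n x :=
  fun i hi => box_mono h (hx i hi)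

lemma SupportedIn.restrictBoard_eq {k : ℕ} {x : Board d} (hx : SupportedIn k x) :
    restrictBoard (box d k) x = x := by
  funext i
  by_cases hi : i ∈ box d k
  · simp [restrictBoard, hi]
  · simpa [restrictBoard, hi, eq_comm] using mt (hx i) hi

lemma SupportedIn.applyMove {k : ℕ} {x : Board d} (hx : SupportedIn k x) {i : Cell d}
    (hi : i ∈ box d k) (c : ℕ) : SupportedIn k (applyMove x (some (i, c))) := by
  intro j hj
  by_cases hji : j = i
  · exact hji ▸ hi
  · exact hx j (by simpa [_root_.applyMove, Function.update_of_ne hji] using hj)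

lemma exists_supportedIn_legalMove_box {k : ℕ} {x : Board d} (hx : SupportedIn k x)
    {a : MoveD d} (ha : legalMove m univ x a) :
    ∃ k' ≥ k, SupportedIn k' (applyMove x a) ∧ ∀ n ≥ k', legalMove m (box d n) x a := by
  rcases a with _ | ⟨i, c⟩
  · exact ⟨k, le_rfl, hx, fun _ _ => trivial⟩
  · obtain ⟨n₀, hi⟩ := exists_mem_box i
    refine ⟨max k n₀, le_max_left _ _,
      (hx.mono (le_max_left _ _)).applyMove (box_mono (le_max_right _ _) hi) c,
      fun n hn => ⟨box_mono ((le_max_right _ _).trans hn) hi, ha.2⟩⟩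

lemma mem_safeRegion_box_of_le {k n N : ℕ} {y : Board d} (hy : SupportedIn k y) (hkn : k ≤ n)
    (hnN : n ≤ N) (h : y ∈ safeRegion m F (box d N)) : y ∈ safeRegion m F (box d n) := by
  have := restrictBoard_mem_safeRegion (box_mono hnN) h
  rwa [(hy.mono hkn).restrictBoard_eq] at this

def eventuallySafe (m : ℕ) (F : List (PatternCode d)) : Set (Board d) :=
  {x | ∃ k, SupportedIn k x ∧ ∀ n ≥ k, x ∈ safeRegion m F (box d n)}

lemma mem_eventuallySafe_of_frequently {k : ℕ} {y : Board d} (hy : SupportedIn k y)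
    (h : ∃ᶠ n in atTop, y ∈ safeRegion m F (box d n)) : y ∈ eventuallySafe m F := by
  refine ⟨k, hy, fun n hn => ?_⟩
  obtain ⟨N, hnN, hN⟩ := frequently_atTop.mp h n
  exact mem_safeRegion_box_of_le hy hn hnN hN

lemma exists_reply_mem_eventuallySafe {k : ℕ} {z : Board d} (hz : SupportedIn k z)
    (h : ∀ n ≥ k, ∃ b, legalMove m (box d n) z b ∧
      applyMove z b ∈ safeRegion m F (box d n)) :
    ∃ b, legalMove m univ z b ∧ applyMove z b ∈ eventuallySafe m F := by
  by_cases hcolour : ∃ i c, legalMove m univ z (some (i, c)) ∧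
      ∃ᶠ n in atTop, applyMove z (some (i, c)) ∈ safeRegion m F (box d n)
  · obtain ⟨i, c, hic, hfreq⟩ := hcolour
    obtain ⟨k', -, hk', -⟩ := exists_supportedIn_legalMove_box hz hic
    exact ⟨_, hic, mem_eventuallySafe_of_frequently hk' hfreq⟩
  push Not at hcolour
  refine ⟨none, trivial, k, hz, fun K hK => ?_⟩
  have hlose : ∀ᶠ n in atTop, ∀ ic ∈ {ic | legalMove m (box d K) z (some ic)},
      applyMove z (some ic) ∉ safeRegion m F (box d n) :=
    (((finite_box K).prod (finite_Iio m)).subset fun _ hic => ⟨hic.1, hic.2.2⟩).eventually_all.2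
      fun ic hic => hcolour ic.1 ic.2 ⟨trivial, hic.2⟩
  obtain ⟨n, hlose, hKn⟩ := (hlose.and (eventually_ge_atTop K)).exists
  obtain ⟨b, hb, hmem⟩ := h n (hK.trans hKn)
  have hrestrict := restrictBoard_mem_safeRegion (box_mono hKn) hmem
  rcases b with _ | ⟨i, c⟩
  · change restrictBoard (box d K) z ∈ _ at hrestrict
    rwa [(hz.mono hK).restrictBoard_eq] at hrestrict
  · by_cases hi : i ∈ box d K
    · exact absurd hmem (hlose (i, c) ⟨hi, hb.2⟩)
    · rwa [restrictBoard_applyMove_of_notMem c hi, (hz.mono hK).restrictBoard_eq] at hrestrict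

lemma isSafeSet_eventuallySafe : IsSafeSet m F univ (eventuallySafe m F) := by
  rintro x ⟨k, hx, hsafe⟩
  refine ⟨(isSafeSet_safeRegion x (hsafe k le_rfl)).1, fun a ha => ?_⟩
  obtain ⟨k', hkk', hk', hlegal⟩ := exists_supportedIn_legalMove_box hx ha
  have hbox : ∀ n ≥ k', ¬ isFinal F (applyMove x a) ∧
      ∃ b, legalMove m (box d n) (applyMove x a) b ∧
        applyMove (applyMove x a) b ∈ safeRegion m F (box d n) :=
    fun n hn => (isSafeSet_safeRegion x (hsafe n (hkk'.trans hn))).2 a (hlegal n hn)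
  exact ⟨(hbox k' le_rfl).1, exists_reply_mem_eventuallySafe hk' fun n hn => (hbox n hn).2⟩

end Boxes

/-- `B` wins the Domino game on `ℤ^d` if and only if `B` wins
the Domino game on every finite box `⟦-n, n⟧^d`, `n ≥ 1`. -/
theorem bWins_iff_bWins_boxes (d m : ℕ) (F : List (PatternCode d)) :
    BWins m F Set.univ alt ↔ ∀ n : ℕ, 1 ≤ n → BWins m F (box d n) alt := by
  simp only [bWins_iff_emptyBoard_mem_safeRegion]
  refine ⟨fun h n _ => ?_, fun h => ?_⟩
  · simpa only [restrictBoard_emptyBoard] using restrictBoard_mem_safeRegion (subset_univ _) h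
  · exact IsSafeSet.subset_safeRegion isSafeSet_eventuallySafe ⟨1, supportedIn_emptyBoard 1, h⟩
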